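/- Theorem 2 (constraint violation): Under the same KL assumptions (∑_s d^{π*}(s)·D_KL(π(·|s)||π_s(·|s)) ≤ ε₁ and ∑_s d^{π*}(s)·D_KL(π_s(·|s)||π*(·|s)) ≤ ε₂), cost function bounds 0 ≤ c ≤ C_m, the error-propagation bound on state marginals, and constraint satisfaction of the optimal policy V^{π*}_c ≤ κ, the learned policy's cost value satisfies V^π_c − κ ≤ (2C_m/(1−γ)²)·(sqrt(ε₁/2)+sqrt(ε₂/2)). -/

import Mathlib

/-!
Up to the factor `1 / (1 - γ)`, the cost gap `V^π_c - V^{π*}_c` is a difference of expectations of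
`c` under the two state–action occupancies; centering `c` at `C_m / 2` bounds it by `C_m` times
their total variation distance. Through the hybrid `d^{π*}(s) π(a|s)` that distance is at most the
state-marginal distance plus `T = ∑_s d^{π*}(s) D_TV(π(·|s), π*(·|s))`, so the error-propagation
bound makes it at most `T / (1 - γ)`. Finally `T ≤ √ε₁ + √ε₂` by the triangle inequality through
`π_s`, the Hellinger form `D_TV ≤ √D_KL` of Pinsker's inequality and Jensen's inequality for `√`;
the remaining factor is `√2 ≤ 2`.
-/

open Finset Real

section Divergences

variable {ι : Type*} [Fintype ι]

/-- Terms with `q i = 0` count as `0` (`log (p / 0) = 0`), hence the absolute-continuity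
hypotheses `0 < p i → 0 < q i` below. -/
noncomputable def discreteKL (p q : ι → ℝ) : ℝ := ∑ i, p i * log (p i / q i)

noncomputable def discreteTV (p q : ι → ℝ) : ℝ := (1 / 2) * ∑ i, |p i - q i|

lemma sum_mul_sqrt_le_sqrt_sum_mul {d K : ι → ℝ}
    (hd0 : ∀ i, 0 ≤ d i) (hd1 : ∑ i, d i = 1) (hK0 : ∀ i, 0 ≤ K i) :
    ∑ i, d i * √(K i) ≤ √(∑ i, d i * K i) := by
  have h := sum_sqrt_mul_sqrt_le univ hd0 fun i => mul_nonneg (hd0 i) (hK0 i)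
  rw [hd1, sqrt_one, one_mul] at h
  convert h using 2 with i
  rw [sqrt_mul (hd0 i), ← mul_assoc, mul_self_sqrt (hd0 i)]

/-- Centering `c` at `M / 2` is free because `∑ (p - q) = 0`, and then `|c - M / 2| ≤ M / 2`. -/
lemma sum_mul_sub_sum_mul_le_mul_discreteTV {p q c : ι → ℝ} {M : ℝ} (hpq : ∑ i, p i = ∑ i, q i)
    (hc0 : ∀ i, 0 ≤ c i) (hcM : ∀ i, c i ≤ M) :
    ∑ i, p i * c i - ∑ i, q i * c i ≤ M * discreteTV p q := by
  have hcenter : ∑ i, p i * c i - ∑ i, q i * c i = ∑ i, (p i - q i) * (c i - M / 2) := by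
    simp only [sub_mul, mul_sub, sum_sub_distrib, ← sum_mul, hpq, sub_self, sub_zero]
  rw [hcenter, discreteTV, mul_sum, mul_sum]
  refine sum_le_sum fun i _ => ?_
  calc (p i - q i) * (c i - M / 2) ≤ |p i - q i| * |c i - M / 2| := by
        rw [← abs_mul]; exact le_abs_self _
    _ ≤ |p i - q i| * (M / 2) := by
        gcongr; rw [abs_le]; constructor <;> linarith [hc0 i, hcM i]
    _ = M * (1 / 2 * |p i - q i|) := by ring

lemma discreteTV_triangle (p q r : ι → ℝ) :
    discreteTV p r ≤ discreteTV p q + discreteTV q r := by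
  unfold discreteTV
  rw [← mul_add, ← sum_add_distrib]
  gcongr
  exact abs_sub_le _ _ _

lemma sq_sqrt_sub_sqrt_le_mul_log_div {x y : ℝ} (hx : 0 ≤ x) (hy : 0 ≤ y) (hxy : 0 < x → 0 < y) :
    (√x - √y) ^ 2 ≤ x * log (x / y) - x + y := by
  rcases hx.eq_or_lt with rfl | hx
  · simp [sq_sqrt hy]
  have hy := hxy hx
  have hsx : 0 < √x := sqrt_pos.mpr hx
  have hlog : log (√y / √x) ≤ √y / √x - 1 :=
    log_le_sub_one_of_pos (div_pos (sqrt_pos.mpr hy) hsx)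
  rw [log_div (sqrt_pos.mpr hy).ne' hsx.ne', log_sqrt hy.le, log_sqrt hx.le] at hlog
  have hxlog : x * log (x / y) = x * (log x - log y) := by rw [log_div hx.ne' hy.ne']
  have hkey : 2 * x - 2 * √x * √y ≤ x * log (x / y) := by
    rw [hxlog]
    have h := mul_le_mul_of_nonneg_left hlog (by positivity : 0 ≤ 2 * x)
    have hx' : x * (√y / √x) = √x * √y := by
      field_simp; rw [sq_sqrt hx.le]
    nlinarith
  nlinarith [sq_sqrt hx.le, sq_sqrt hy.le]

variable {p q : ι → ℝ}

lemma sum_sq_sqrt_sub_sqrt_le_discreteKL (hp0 : ∀ i, 0 ≤ p i) (hq0 : ∀ i, 0 ≤ q i)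
    (hp1 : ∑ i, p i = 1) (hq1 : ∑ i, q i = 1) (hpq : ∀ i, 0 < p i → 0 < q i) :
    ∑ i, (√(p i) - √(q i)) ^ 2 ≤ discreteKL p q := by
  have h := sum_le_sum fun i (_ : i ∈ univ) =>
    sq_sqrt_sub_sqrt_le_mul_log_div (hp0 i) (hq0 i) (hpq i)
  rwa [sum_add_distrib, sum_sub_distrib, hp1, hq1, sub_add_cancel] at h

lemma discreteKL_nonneg (hp0 : ∀ i, 0 ≤ p i) (hq0 : ∀ i, 0 ≤ q i)
    (hp1 : ∑ i, p i = 1) (hq1 : ∑ i, q i = 1) (hpq : ∀ i, 0 < p i → 0 < q i) :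
    0 ≤ discreteKL p q :=
  (sum_nonneg fun _ _ => sq_nonneg _).trans
    (sum_sq_sqrt_sub_sqrt_le_discreteKL hp0 hq0 hp1 hq1 hpq)

/-- Pinsker's inequality without its factor `1 / √2`, via the Hellinger distance:
`|p - q| = |√p - √q| (√p + √q)` and Cauchy–Schwarz. -/
lemma discreteTV_le_sqrt_discreteKL (hp0 : ∀ i, 0 ≤ p i) (hq0 : ∀ i, 0 ≤ q i)
    (hp1 : ∑ i, p i = 1) (hq1 : ∑ i, q i = 1) (hpq : ∀ i, 0 < p i → 0 < q i) :
    discreteTV p q ≤ √(discreteKL p q) := by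
  have hfactor : ∀ i, |p i - q i| = |√(p i) - √(q i)| * (√(p i) + √(q i)) := fun i => by
    rw [← abs_of_nonneg (by positivity : 0 ≤ √(p i) + √(q i)), ← abs_mul, ← sq_sqrt (hp0 i),
      ← sq_sqrt (hq0 i), sqrt_sq (sqrt_nonneg _), sqrt_sq (sqrt_nonneg _)]
    ring_nf
  have hsum_sq_add : ∑ i, (√(p i) + √(q i)) ^ 2 ≤ 4 := by
    calc ∑ i, (√(p i) + √(q i)) ^ 2 ≤ ∑ i, 2 * (p i + q i) := by
          gcongr with i
          nlinarith [sq_sqrt (hp0 i), sq_sqrt (hq0 i), sq_nonneg (√(p i) - √(q i))]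
      _ = 4 := by rw [← mul_sum, sum_add_distrib, hp1, hq1]; norm_num
  have hCS : ∑ i, |p i - q i| ≤ √(discreteKL p q) * √4 := by
    simp_rw [hfactor]
    refine (sum_mul_le_sqrt_mul_sqrt _ _ _).trans (mul_le_mul ?_ ?_ (sqrt_nonneg _) (sqrt_nonneg _))
    · simpa only [sq_abs] using sqrt_le_sqrt (sum_sq_sqrt_sub_sqrt_le_discreteKL hp0 hq0 hp1 hq1 hpq)
    · exact sqrt_le_sqrt hsum_sq_add
  rw [show (4 : ℝ) = 2 ^ 2 by norm_num, sqrt_sq zero_le_two] at hCS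
  unfold discreteTV
  linarith

end Divergences

section Joint

variable {S A : Type*} [Fintype S] [Fintype A]

lemma sum_mul_eq_one {d : S → ℝ} {ρ : S → A → ℝ} (hd1 : ∑ s, d s = 1)
    (hρ1 : ∀ s, ∑ a, ρ s a = 1) : ∑ x : S × A, d x.1 * ρ x.1 x.2 = 1 := by
  simp [Fintype.sum_prod_type, ← mul_sum, hρ1, hd1]

/-- Pass through the hybrid `d' s * ρ s a`. -/
lemma discreteTV_mul_le (d d' : S → ℝ) {ρ ρ' : S → A → ℝ} (hρ0 : ∀ s a, 0 ≤ ρ s a)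
    (hρ1 : ∀ s, ∑ a, ρ s a = 1) (hd'0 : ∀ s, 0 ≤ d' s) :
    discreteTV (fun x : S × A => d x.1 * ρ x.1 x.2) (fun x => d' x.1 * ρ' x.1 x.2) ≤
      discreteTV d d' + ∑ s, d' s * discreteTV (ρ s) (ρ' s) := by
  have hsplit : ∀ s a, |d s * ρ s a - d' s * ρ' s a| ≤
      |d s - d' s| * ρ s a + d' s * |ρ s a - ρ' s a| := fun s a => by
    calc |d s * ρ s a - d' s * ρ' s a| = |(d s - d' s) * ρ s a + d' s * (ρ s a - ρ' s a)| := by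
          ring_nf
      _ ≤ |(d s - d' s) * ρ s a| + |d' s * (ρ s a - ρ' s a)| := abs_add_le _ _
      _ = |d s - d' s| * ρ s a + d' s * |ρ s a - ρ' s a| := by
          rw [abs_mul, abs_mul, abs_of_nonneg (hρ0 s a), abs_of_nonneg (hd'0 s)]
  have hstate : ∀ s, ∑ a, |d s * ρ s a - d' s * ρ' s a| ≤
      |d s - d' s| + d' s * ∑ a, |ρ s a - ρ' s a| := fun s => by
    calc ∑ a, |d s * ρ s a - d' s * ρ' s a|
        ≤ ∑ a, (|d s - d' s| * ρ s a + d' s * |ρ s a - ρ' s a|) := sum_le_sum fun a _ => hsplit s a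
      _ = |d s - d' s| + d' s * ∑ a, |ρ s a - ρ' s a| := by
          rw [sum_add_distrib, ← mul_sum, ← mul_sum, hρ1, mul_one]
  unfold discreteTV
  rw [Fintype.sum_prod_type]
  calc 1 / 2 * ∑ s, ∑ a, |d s * ρ s a - d' s * ρ' s a|
      ≤ 1 / 2 * ∑ s, (|d s - d' s| + d' s * ∑ a, |ρ s a - ρ' s a|) := by
        gcongr with s; exact hstate s
    _ = _ := by
        rw [sum_add_distrib, mul_add, add_right_inj, mul_sum]
        exact sum_congr rfl fun s _ => by ring

variable {d : S → ℝ} {p q r : S → A → ℝ}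

lemma sum_mul_discreteTV_le_sqrt_add_sqrt (hd0 : ∀ s, 0 ≤ d s) (hd1 : ∑ s, d s = 1)
    (hp0 : ∀ s a, 0 ≤ p s a) (hp1 : ∀ s, ∑ a, p s a = 1)
    (hq0 : ∀ s a, 0 ≤ q s a) (hq1 : ∀ s, ∑ a, q s a = 1)
    (hr0 : ∀ s a, 0 ≤ r s a) (hr1 : ∀ s, ∑ a, r s a = 1)
    (hpq : ∀ s a, 0 < p s a → 0 < q s a) (hqr : ∀ s a, 0 < q s a → 0 < r s a) :
    ∑ s, d s * discreteTV (p s) (r s) ≤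
      √(∑ s, d s * discreteKL (p s) (q s)) + √(∑ s, d s * discreteKL (q s) (r s)) := by
  have hstate : ∀ s, discreteTV (p s) (r s) ≤
      √(discreteKL (p s) (q s)) + √(discreteKL (q s) (r s)) := fun s =>
    (discreteTV_triangle _ (q s) _).trans (add_le_add
      (discreteTV_le_sqrt_discreteKL (hp0 s) (hq0 s) (hp1 s) (hq1 s) (hpq s))
      (discreteTV_le_sqrt_discreteKL (hq0 s) (hr0 s) (hq1 s) (hr1 s) (hqr s)))
  calc ∑ s, d s * discreteTV (p s) (r s)
      ≤ ∑ s, d s * √(discreteKL (p s) (q s)) + ∑ s, d s * √(discreteKL (q s) (r s)) := by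
        rw [← sum_add_distrib]
        gcongr with s
        rw [← mul_add]; exact mul_le_mul_of_nonneg_left (hstate s) (hd0 s)
    _ ≤ _ := add_le_add
        (sum_mul_sqrt_le_sqrt_sum_mul hd0 hd1 fun s =>
          discreteKL_nonneg (hp0 s) (hq0 s) (hp1 s) (hq1 s) (hpq s))
        (sum_mul_sqrt_le_sqrt_sum_mul hd0 hd1 fun s =>
          discreteKL_nonneg (hq0 s) (hr0 s) (hq1 s) (hr1 s) (hqr s))

end Joint

lemma sqrt_le_two_mul_sqrt_half (x : ℝ) : √x ≤ 2 * √(x / 2) := by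
  have h : √x = √2 * √(x / 2) := by
    rw [← sqrt_mul zero_le_two]; ring_nf
  rw [h]
  gcongr
  rw [sqrt_le_left zero_le_two]; norm_num

theorem theorem2_constraint_violation_general {S A : Type*} [Fintype S] [Fintype A]
    (γ C_m ε₁ ε₂ κ : ℝ) (hγ1 : γ < 1)
    (c : S × A → ℝ) (hc0 : ∀ x, 0 ≤ c x) (hcM : ∀ x, c x ≤ C_m)
    (dpi dstar : S → ℝ) (pi pis pistar : S → A → ℝ)
    (hd1 : ∑ s, dpi s = 1)
    (hs0 : ∀ s, 0 ≤ dstar s) (hs1 : ∑ s, dstar s = 1)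
    (hpi0 : ∀ s a, 0 ≤ pi s a) (hpi1 : ∀ s, ∑ a, pi s a = 1)
    (hpis0 : ∀ s a, 0 ≤ pis s a) (hpis1 : ∀ s, ∑ a, pis s a = 1)
    (hps0 : ∀ s a, 0 ≤ pistar s a) (hps1 : ∀ s, ∑ a, pistar s a = 1)
    (hac1 : ∀ s a, 0 < pi s a → 0 < pis s a)
    (hac2 : ∀ s a, 0 < pis s a → 0 < pistar s a)
    (hkl1 : ∑ s, dstar s * ∑ a, pi s a * Real.log (pi s a / pis s a) ≤ ε₁)
    (hkl2 : ∑ s, dstar s * ∑ a, pis s a * Real.log (pis s a / pistar s a) ≤ ε₂)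
    (herr : (1/2) * ∑ s, |dpi s - dstar s| ≤
      (γ/(1-γ)) * ∑ s, dstar s * ((1/2) * ∑ a, |pi s a - pistar s a|))
    (Vpic Vstarc : ℝ)
    (hVpic : Vpic = (1/(1-γ)) * ∑ x : S × A, dpi x.1 * pi x.1 x.2 * c x)
    (hVstarc : Vstarc = (1/(1-γ)) * ∑ x : S × A, dstar x.1 * pistar x.1 x.2 * c x)
    (hfeas : Vstarc ≤ κ) :
    Vpic - κ ≤
      (2 * C_m / (1-γ)^2) * (Real.sqrt (ε₁ / 2) + Real.sqrt (ε₂ / 2)) := by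
  have h1γ : 0 < 1 - γ := sub_pos.mpr hγ1
  have hCm : 0 ≤ C_m := by
    obtain ⟨s, -, -⟩ := exists_ne_zero_of_sum_ne_zero (hd1 ▸ one_ne_zero : ∑ s, dpi s ≠ 0)
    obtain ⟨a, -, -⟩ := exists_ne_zero_of_sum_ne_zero (hpi1 s ▸ one_ne_zero : ∑ a, pi s a ≠ 0)
    exact (hc0 (s, a)).trans (hcM (s, a))
  set T := ∑ s, dstar s * discreteTV (pi s) (pistar s)
  set B := √(ε₁ / 2) + √(ε₂ / 2)
  have hT : T ≤ 2 * B := by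
    have hkl1' : √(∑ s, dstar s * discreteKL (pi s) (pis s)) ≤ √ε₁ := sqrt_le_sqrt hkl1
    have hkl2' : √(∑ s, dstar s * discreteKL (pis s) (pistar s)) ≤ √ε₂ := sqrt_le_sqrt hkl2
    linarith [sum_mul_discreteTV_le_sqrt_add_sqrt hs0 hs1 hpi0 hpi1 hpis0 hpis1 hps0 hps1 hac1 hac2,
      sqrt_le_two_mul_sqrt_half ε₁, sqrt_le_two_mul_sqrt_half ε₂]
  set dTV := discreteTV (fun x : S × A => dpi x.1 * pi x.1 x.2) (fun x => dstar x.1 * pistar x.1 x.2)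
  have hjoint : dTV ≤ T / (1 - γ) := by
    have := discreteTV_mul_le dpi dstar (ρ' := pistar) hpi0 hpi1 hs0
    have hgeom : γ / (1 - γ) * T + T = T / (1 - γ) := by field_simp; ring
    change discreteTV dpi dstar ≤ γ / (1 - γ) * T at herr
    linarith
  have hgap : Vpic - Vstarc ≤ C_m / (1 - γ) * dTV := by
    have := sum_mul_sub_sum_mul_le_mul_discreteTV (p := fun x : S × A => dpi x.1 * pi x.1 x.2)
      (q := fun x => dstar x.1 * pistar x.1 x.2)
      (by rw [sum_mul_eq_one hd1 hpi1, sum_mul_eq_one hs1 hps1]) hc0 hcM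
    rw [hVpic, hVstarc, ← mul_sub, div_eq_mul_one_div C_m, mul_comm C_m, mul_assoc]
    exact mul_le_mul_of_nonneg_left this (by positivity)
  calc Vpic - κ ≤ C_m / (1 - γ) * dTV := by linarith
    _ ≤ C_m / (1 - γ) * (2 * B / (1 - γ)) := by gcongr; exact hjoint.trans (by gcongr)
    _ = 2 * C_m / (1 - γ) ^ 2 * B := by field_simp

theorem theorem2_constraint_violation {S A : Type*} [Fintype S] [Fintype A]
    (γ C_m ε₁ ε₂ κ : ℝ) (hγ0 : 0 < γ) (hγ1 : γ < 1)
    (c : S × A → ℝ) (hc0 : ∀ x, 0 ≤ c x) (hcM : ∀ x, c x ≤ C_m)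
    (dpi dstar : S → ℝ) (pi pis pistar : S → A → ℝ)
    (hd0 : ∀ s, 0 ≤ dpi s) (hd1 : ∑ s, dpi s = 1)
    (hs0 : ∀ s, 0 ≤ dstar s) (hs1 : ∑ s, dstar s = 1)
    (hpi0 : ∀ s a, 0 ≤ pi s a) (hpi1 : ∀ s, ∑ a, pi s a = 1)
    (hpis0 : ∀ s a, 0 ≤ pis s a) (hpis1 : ∀ s, ∑ a, pis s a = 1)
    (hps0 : ∀ s a, 0 ≤ pistar s a) (hps1 : ∀ s, ∑ a, pistar s a = 1)
    (hac1 : ∀ s a, 0 < pi s a → 0 < pis s a)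
    (hac2 : ∀ s a, 0 < pis s a → 0 < pistar s a)
    (hkl1 : ∑ s, dstar s * ∑ a, pi s a * Real.log (pi s a / pis s a) ≤ ε₁)
    (hkl2 : ∑ s, dstar s * ∑ a, pis s a * Real.log (pis s a / pistar s a) ≤ ε₂)
    (herr : (1/2) * ∑ s, |dpi s - dstar s| ≤
      (γ/(1-γ)) * ∑ s, dstar s * ((1/2) * ∑ a, |pi s a - pistar s a|))
    (Vpic Vstarc : ℝ)
    (hVpic : Vpic = (1/(1-γ)) * ∑ x : S × A, dpi x.1 * pi x.1 x.2 * c x)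
    (hVstarc : Vstarc = (1/(1-γ)) * ∑ x : S × A, dstar x.1 * pistar x.1 x.2 * c x)
    (hfeas : Vstarc ≤ κ) :
    Vpic - κ ≤
      (2 * C_m / (1-γ)^2) * (Real.sqrt (ε₁ / 2) + Real.sqrt (ε₂ / 2)) :=
  theorem2_constraint_violation_general γ C_m ε₁ ε₂ κ hγ1 c hc0 hcM dpi dstar pi pis pistar hd1 hs0
    hs1 hpi0 hpi1 hpis0 hpis1 hps0 hps1 hac1 hac2 hkl1 hkl2 herr Vpic Vstarc hVpic hVstarc hfeas
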